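/- arXiv:0903.4798 — 2 statements merged into one kernel-verified Lean document; each statement's English description precedes it below -/
import Mathlib

section
/- On ℝ^n (n ≥ 3) with flat metric, for a smooth density f of weight w (treated as a smooth function) and ℓ ≥ 1, the commutation identity Δ^ℓ (X_B ρ) = -ℓ(n+2ℓ-2) Y_B Δ^{ℓ-1} ρ + 2ℓ Z_B^b ∇_b Δ^{ℓ-1} ρ + X_B Δ^ℓ ρ holds, where Y_B, Z_B^b, X_B are the flat-metric tractor projectors satisfying ∇_a Y_B σ = Y_B ∇_a σ, ∇_a Z_B^b μ_b = -Y_B μ_a + Z_B^b ∇_a μ_b, ∇_a X_B ρ = Z_B^b g_{ab} ρ + X_B ∇_a ρ (curvature terms vanishing). Abstractly: if V is a module with commuting operators ∇_a (a = 1..n), Δ = Σ_a ∇_a∇_a, and formal symbols Y, Z^b, X satisfying the above commutation rules with ∇_a, then the stated identity holds by induction on ℓ. -/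
/-!
Each `∇_a` moves past `Y` unchanged, past `Z^b` at the cost of a `Y`-term, and past `X` at the cost
of a `Z`-term. Hence `Δ` maps the three expressions `Y σ`, `Z^b ∇_b τ`, `X τ` into their span:
`Δ (Y σ) = Y Δσ`, `Δ (Z^b ∇_b τ) = -2 Y Δτ + Z^b ∇_b Δτ` (using that `Δ` commutes with `∇_b`), and
`Δ (X τ) = -n Y τ + 2 Z^b ∇_b τ + X Δτ`. Iterating these three rules gives the formula by induction
on `ℓ`; the `Y`-coefficients satisfy `c_{ℓ+1} = c_ℓ - n - 4ℓ`, whence `c_ℓ = -ℓ(n+2ℓ-2)`.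
-/

open Finset

section Tractor

variable {R ι V W : Type*} [CommRing R] [Fintype ι]
  [AddCommGroup V] [Module R V] [AddCommGroup W] [Module R W]

def laplacian (D : ι → Module.End R V) : Module.End R V :=
  ∑ a, D a * D a

theorem laplacian_apply (D : ι → Module.End R V) (v : V) :
    laplacian D v = ∑ a, D a (D a v) := by
  simp only [laplacian, LinearMap.sum_apply, Module.End.mul_apply]

theorem commute_laplacian {D : ι → Module.End R V} (hcomm : ∀ a b, Commute (D a) (D b))
    (b : ι) : Commute (laplacian D) (D b) :=
  Commute.sum_left _ _ _ fun a _ => (hcomm a b).mul_left (hcomm a b)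

variable {Dv : ι → Module.End R V} {Dw : ι → Module.End R W}
  {X Y : V →ₗ[R] W} {Z : ι → V →ₗ[R] W}

theorem laplacian_apply_Y (hY : ∀ a σ, Dw a (Y σ) = Y (Dv a σ)) (σ : V) :
    laplacian Dw (Y σ) = Y (laplacian Dv σ) := by
  simp only [laplacian_apply, hY, map_sum]

theorem apply_Z_self [DecidableEq ι]
    (hZ : ∀ a (μ : ι → V), Dw a (∑ b, Z b (μ b)) = -Y (μ a) + ∑ b, Z b (Dv a (μ b)))
    (a : ι) (τ : V) : Dw a (Z a τ) = -Y τ + Z a (Dv a τ) := by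
  have h := hZ a (Pi.single a τ)
  simp only [Pi.single_apply, apply_ite, map_zero, sum_ite_eq', mem_univ, if_true] at h
  exact h

theorem laplacian_apply_X
    (hZ : ∀ a (μ : ι → V), Dw a (∑ b, Z b (μ b)) = -Y (μ a) + ∑ b, Z b (Dv a (μ b)))
    (hX : ∀ a ρ, Dw a (X ρ) = Z a ρ + X (Dv a ρ)) (τ : V) :
    laplacian Dw (X τ)
      = (-(Fintype.card ι : R)) • Y τ + (2 : R) • ∑ b, Z b (Dv b τ) + X (laplacian Dv τ) := by
  classical
  have hsummand : ∀ a, Dw a (Dw a (X τ))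
      = -Y τ + (2 : R) • Z a (Dv a τ) + X (Dv a (Dv a τ)) := by
    intro a
    rw [hX, map_add, apply_Z_self hZ, hX]
    module
  simp only [laplacian_apply, hsummand, sum_add_distrib, ← smul_sum, ← map_sum, sum_const,
    card_univ]
  module

theorem laplacian_apply_sum_Z (hcomm : ∀ a b, Commute (Dv a) (Dv b))
    (hY : ∀ a σ, Dw a (Y σ) = Y (Dv a σ))
    (hZ : ∀ a (μ : ι → V), Dw a (∑ b, Z b (μ b)) = -Y (μ a) + ∑ b, Z b (Dv a (μ b)))
    (τ : V) :
    laplacian Dw (∑ b, Z b (Dv b τ))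
      = (-2 : R) • Y (laplacian Dv τ) + ∑ b, Z b (Dv b (laplacian Dv τ)) := by
  have hsummand : ∀ a, Dw a (Dw a (∑ b, Z b (Dv b τ)))
      = (-2 : R) • Y (Dv a (Dv a τ)) + ∑ b, Z b (Dv a (Dv a (Dv b τ))) := by
    intro a
    rw [hZ, map_add, map_neg, hY, hZ]
    module
  have hcomm_apply : ∀ b, laplacian Dv (Dv b τ) = Dv b (laplacian Dv τ) := fun b =>
    LinearMap.congr_fun (commute_laplacian hcomm b).eq τ
  simp only [laplacian_apply, hsummand, sum_add_distrib, ← smul_sum, ← map_sum]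
  rw [sum_comm]
  simp only [← map_sum, ← laplacian_apply, hcomm_apply]

theorem laplacian_pow_succ_apply_X (hcomm : ∀ a b, Commute (Dv a) (Dv b))
    (hY : ∀ a σ, Dw a (Y σ) = Y (Dv a σ))
    (hZ : ∀ a (μ : ι → V), Dw a (∑ b, Z b (μ b)) = -Y (μ a) + ∑ b, Z b (Dv a (μ b)))
    (hX : ∀ a ρ, Dw a (X ρ) = Z a ρ + X (Dv a ρ)) (m : ℕ) (ρ : V) :
    (laplacian Dw ^ (m + 1)) (X ρ)
      = (-((m + 1 : R) * (Fintype.card ι + 2 * m))) • Y ((laplacian Dv ^ m) ρ)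
        + (2 * (m + 1 : R)) • ∑ b, Z b (Dv b ((laplacian Dv ^ m) ρ))
        + X ((laplacian Dv ^ (m + 1)) ρ) := by
  induction m with
  | zero => simpa using laplacian_apply_X hZ hX ρ
  | succ m ih =>
    rw [pow_succ', Module.End.mul_apply, ih, map_add, map_add, map_smul, map_smul,
      laplacian_apply_Y hY, laplacian_apply_sum_Z hcomm hY hZ, laplacian_apply_X hZ hX,
      ← Module.End.mul_apply, ← pow_succ', ← Module.End.mul_apply (laplacian Dv), ← pow_succ']
    push_cast
    module

end Tractor

theorem laplacian_power_commute_X_general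
    (n ℓ : ℕ)
    (V W : Type) [AddCommGroup V] [Module ℝ V] [AddCommGroup W] [Module ℝ W]
    (Dv : Fin n → Module.End ℝ V) (Dw : Fin n → Module.End ℝ W)
    (X Y : V →ₗ[ℝ] W) (Z : Fin n → V →ₗ[ℝ] W)
    (hcomm : ∀ a b, Dv a * Dv b = Dv b * Dv a)
    (hY : ∀ (a : Fin n) (σ : V), Dw a (Y σ) = Y (Dv a σ))
    (hZ : ∀ (a : Fin n) (μ : Fin n → V),
      Dw a (∑ b, Z b (μ b)) = -(Y (μ a)) + ∑ b, Z b (Dv a (μ b)))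
    (hX : ∀ (a : Fin n) (ρ : V), Dw a (X ρ) = Z a ρ + X (Dv a ρ))
    (ρ : V) :
    ((∑ a, Dw a * Dw a) ^ ℓ) (X ρ)
      = (-((ℓ : ℝ) * ((n : ℝ) + 2 * (ℓ : ℝ) - 2))) •
            Y (((∑ a, Dv a * Dv a) ^ (ℓ - 1)) ρ)
        + (2 * (ℓ : ℝ)) •
            ∑ b, Z b (Dv b (((∑ a, Dv a * Dv a) ^ (ℓ - 1)) ρ))
        + X (((∑ a, Dv a * Dv a) ^ ℓ) ρ) := by
  obtain _ | m := ℓ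
  · simp -- both coefficients vanish, so the truncated `0 - 1` is harmless
  · have h := laplacian_pow_succ_apply_X hcomm hY hZ hX m ρ
    simp only [laplacian, Fintype.card_fin] at h
    rw [h, Nat.add_sub_cancel]
    push_cast
    ring_nf

/-- Formula (Decomp), third line: on flat `ℝ^n`,
`Δ^ℓ (X ρ) = -ℓ(n+2ℓ-2) Y Δ^{ℓ-1} ρ + 2ℓ Z^b ∇_b Δ^{ℓ-1} ρ + X Δ^ℓ ρ`,
modeled abstractly via modules with commuting operators `∇_a` and formal tractor
generators `Y, Z^b, X` obeying the flat commutation rules. -/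
theorem laplacian_power_commute_X
    (n ℓ : ℕ) (hn : 3 ≤ n) (hl : 1 ≤ ℓ)
    (V W : Type) [AddCommGroup V] [Module ℝ V] [AddCommGroup W] [Module ℝ W]
    (Dv : Fin n → Module.End ℝ V) (Dw : Fin n → Module.End ℝ W)
    (X Y : V →ₗ[ℝ] W) (Z : Fin n → V →ₗ[ℝ] W)
    (hcomm : ∀ a b, Dv a * Dv b = Dv b * Dv a)
    (hY : ∀ (a : Fin n) (σ : V), Dw a (Y σ) = Y (Dv a σ))
    (hZ : ∀ (a : Fin n) (μ : Fin n → V),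
      Dw a (∑ b, Z b (μ b)) = -(Y (μ a)) + ∑ b, Z b (Dv a (μ b)))
    (hX : ∀ (a : Fin n) (ρ : V), Dw a (X ρ) = Z a ρ + X (Dv a ρ))
    (ρ : V) :
    ((∑ a, Dw a * Dw a) ^ ℓ) (X ρ)
      = (-((ℓ : ℝ) * ((n : ℝ) + 2 * (ℓ : ℝ) - 2))) •
            Y (((∑ a, Dv a * Dv a) ^ (ℓ - 1)) ρ)
        + (2 * (ℓ : ℝ)) •
            ∑ b, Z b (Dv b (((∑ a, Dv a * Dv a) ^ (ℓ - 1)) ρ))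
        + X (((∑ a, Dv a * Dv a) ^ ℓ) ρ) :=
  laplacian_power_commute_X_general n ℓ V W Dv Dw X Y Z hcomm hY hZ hX ρ
end

section
/- Conformal invariance of the flat-metric tractor-D operator in degree 0: let f : ℝ^n → ℝ be smooth (n ≥ 3), regarded as a conformal density of weight w for the flat metric g₀, and let Υ : ℝ^n → ℝ be smooth with Υ_a = ∂_a Υ. Under ĝ = e^{2Υ}g₀ (with Schouten tensor P̂_{ab} = -∂_aΥ_b + Υ_aΥ_b - ½|Υ|²g_{ab}, Ĵ = tr P̂, and transformed derivative ∂̂_a f = ∂_a f + wΥ_a f on weight-w densities), the triple D_A f computed in scale ĝ, namely ((n+2w-2)w f, (n+2w-2)(∂̂_a f), -(Δ̂ f + w Ĵ f)) where Δ̂ is the conformally transformed Laplacian on weight-w densities, equals the image under the tractor transformation matrix T(Υ) of the triple D_A f computed in scale g₀, namely ((n+2w-2)w f, (n+2w-2)∂_a f, -(Δf)). -/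
/-- Partial derivative in the `a`-th coordinate direction on `ℝ^n`. -/
noncomputable def pd (n : ℕ) (a : Fin n) (F : (Fin n → ℝ) → ℝ)
    (x : Fin n → ℝ) : ℝ :=
  fderiv ℝ F x (Pi.single a 1)


lemma pd_smooth {n : ℕ} {F : (Fin n → ℝ) → ℝ} (hF : ContDiff ℝ (⊤ : ℕ∞) F) (a : Fin n) :
    ContDiff ℝ (⊤ : ℕ∞) (fun x => pd n a F x) :=
  (hF.fderiv_right (by simp)).clm_apply contDiff_const

lemma pd_add {n : ℕ} {F G : (Fin n → ℝ) → ℝ} {x : Fin n → ℝ}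
    (hF : DifferentiableAt ℝ F x) (hG : DifferentiableAt ℝ G x) (a : Fin n) :
    pd n a (fun y => F y + G y) x = pd n a F x + pd n a G x := by
  unfold pd; rw [fderiv_fun_add hF hG]; simp

lemma pd_mul {n : ℕ} {F G : (Fin n → ℝ) → ℝ} {x : Fin n → ℝ}
    (hF : DifferentiableAt ℝ F x) (hG : DifferentiableAt ℝ G x) (a : Fin n) :
    pd n a (fun y => F y * G y) x = pd n a F x * G x + F x * pd n a G x := by
  unfold pd; rw [fderiv_fun_mul hF hG]; simp; ring

lemma pd_const_mul {n : ℕ} {G : (Fin n → ℝ) → ℝ} {x : Fin n → ℝ} (c : ℝ)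
    (hG : DifferentiableAt ℝ G x) (a : Fin n) :
    pd n a (fun y => c * G y) x = c * pd n a G x := by
  unfold pd; rw [fderiv_const_mul hG]; simp

/-- Conformal invariance of the flat tractor-D operator on weight-`w` densities:
the triple `D_A f` computed in the scale `ĝ = e^{2Υ}g₀` equals the image of the
triple `D_A f` computed in the flat scale under the tractor change matrix `T(Υ)`. -/
theorem tractorD_conformal_invariance
    (n : ℕ) (hn : 3 ≤ n) (w : ℝ)
    (f Υ : (Fin n → ℝ) → ℝ)
    (hf : ContDiff ℝ (⊤ : ℕ∞) f) (hΥ : ContDiff ℝ (⊤ : ℕ∞) Υ) :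
    ∀ x : Fin n → ℝ,
      -- transformed Schouten tensor, its trace, transformed derivative and Laplacian
      (let Υd : Fin n → (Fin n → ℝ) → ℝ := fun a => pd n a Υ
       let Phat : Fin n → Fin n → (Fin n → ℝ) → ℝ := fun a b y =>
         -(pd n a (Υd b) y) + Υd a y * Υd b y -
           (1 / 2) * (∑ c, Υd c y * Υd c y) * (if a = b then (1 : ℝ) else 0)
       let Jhat : (Fin n → ℝ) → ℝ := fun y => ∑ a, Phat a a y
       -- transformed gradient on weight-w densities
       let h : Fin n → (Fin n → ℝ) → ℝ := fun a y => pd n a f y + w * Υd a y * f y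
       -- transformed Laplacian on weight-w densities (rule (grad_trans_gen) with s = 1)
       let Δhat : (Fin n → ℝ) → ℝ := fun y =>
         (∑ a, pd n a (h a) y) + (w + (n : ℝ) - 2) * (∑ a, Υd a y * h a y)
       -- flat Laplacian
       let Δ : (Fin n → ℝ) → ℝ := fun y => ∑ a, pd n a (pd n a f) y
       -- tractor change matrix for the flat metric
       let T : (Fin n → ℝ) → (ℝ × (Fin n → ℝ) × ℝ) → ℝ × (Fin n → ℝ) × ℝ :=
         fun Υv z =>
           (z.1, fun a => Υv a * z.1 + z.2.1 a,
             -(1 / 2) * (∑ c, Υv c * Υv c) * z.1 - (∑ b, Υv b * z.2.1 b) + z.2.2)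
       ((((n : ℝ) + 2 * w - 2) * w * f x,
          fun a => ((n : ℝ) + 2 * w - 2) * h a x,
          -(Δhat x + w * Jhat x * f x))
        = T (fun a => Υd a x)
            (((n : ℝ) + 2 * w - 2) * w * f x,
              fun a => ((n : ℝ) + 2 * w - 2) * pd n a f x,
              -(Δ x))) : Prop) := by
  intro x
  have df : DifferentiableAt ℝ f x := (hf.differentiable (by simp)) x
  have dΥ : ∀ a : Fin n, DifferentiableAt ℝ (pd n a Υ) x :=
    fun a => ((pd_smooth hΥ a).differentiable (by simp)) x
  have dpf : ∀ a : Fin n, DifferentiableAt ℝ (pd n a f) x :=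
    fun a => ((pd_smooth hf a).differentiable (by simp)) x
  dsimp only
  refine Prod.ext rfl (Prod.ext ?_ ?_)
  · funext a
    dsimp only
    ring
  · dsimp only
    have step : ∀ a : Fin n,
        pd n a (fun y => pd n a f y + w * pd n a Υ y * f y) x
          = pd n a (pd n a f) x
            + (w * (pd n a (pd n a Υ) x * f x) + w * (pd n a Υ x * pd n a f x)) := by
      intro a
      rw [pd_add (G := fun y => w * pd n a Υ y * f y) (dpf a) (((dΥ a).const_mul w).mul df) a,
          pd_mul (F := fun y => w * pd n a Υ y) ((dΥ a).const_mul w) df a,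
          pd_const_mul w (dΥ a) a]
      ring
    have E1 : (∑ a, pd n a (fun y => pd n a f y + w * pd n a Υ y * f y) x)
        = (∑ a, pd n a (pd n a f) x)
          + (w * ((∑ a, pd n a (pd n a Υ) x) * f x)
            + w * (∑ a, pd n a Υ x * pd n a f x)) := by
      rw [Finset.sum_congr rfl (fun a _ => step a), Finset.sum_add_distrib,
          Finset.sum_add_distrib, ← Finset.mul_sum, ← Finset.mul_sum, ← Finset.sum_mul]
    have E2 : (∑ a, pd n a Υ x * (pd n a f x + w * pd n a Υ x * f x))
        = (∑ a, pd n a Υ x * pd n a f x)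
          + w * (∑ a, pd n a Υ x * pd n a Υ x) * f x := by
      rw [Finset.mul_sum, Finset.sum_mul, ← Finset.sum_add_distrib]
      exact Finset.sum_congr rfl (fun a _ => by ring)
    have E3 : (∑ a : Fin n, (-(pd n a (pd n a Υ) x) + pd n a Υ x * pd n a Υ x
          - 1 / 2 * (∑ c, pd n c Υ x * pd n c Υ x) * (if a = a then (1:ℝ) else 0)))
        = -(∑ a, pd n a (pd n a Υ) x) + (∑ a, pd n a Υ x * pd n a Υ x)
          - (n : ℝ) * (1 / 2 * (∑ c, pd n c Υ x * pd n c Υ x)) := by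
      simp [Finset.sum_add_distrib, sub_eq_add_neg, Finset.sum_neg_distrib,
        Finset.sum_const, Finset.card_univ, nsmul_eq_mul]
    have E4 : (∑ b, pd n b Υ x * (((n : ℝ) + 2 * w - 2) * pd n b f x))
        = ((n : ℝ) + 2 * w - 2) * (∑ b, pd n b Υ x * pd n b f x) := by
      rw [Finset.mul_sum]
      exact Finset.sum_congr rfl (fun a _ => by ring)
    rw [E1, E2, E3, E4]
    ring
end
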